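/- Let A_t be an attractor of the asynchronous transition system TS of a Boolean network BN. If C = (𝕆,𝟙) is a temporary target control for A_t (i.e., for every state s ∈ S and every fair infinite path ρ = ρ_0 → ρ_1 → … of TS|_C starting from ρ_0 = C(s), there exists t_0 ≥ 0 such that for all t ≥ t_0, every fair infinite path of TS starting from ρ_t eventually reaches a state of A_t), then every intermediate state lies in the weak basin of A_t in TS: C(S) ⊆ bas^W_{TS}(A_t). -/

import Mathlib

/-!
A finite transition system in which every state has a successor always has a fair path from any
state: walk into a terminal strongly connected class and then pass through each of its states
infinitely often. Applied to the controlled network this gives a fair path `ρ` from `C(s)`, and,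
at the time `t₀` supplied by the hypothesis, applied to the original network a fair path from
`ρ t₀` that meets `A_t`. Each transition of `TS|_C` from a state fixed by the control is a
transition of `TS` or a self-loop, so `ρ t₀`, and hence a state of `A_t`, is reachable from `C(s)`
in `TS`.
-/

/-- A state of a Boolean network with `n` variables. -/
abbrev BNState (n : ℕ) := Fin n → Bool

/-- One asynchronous transition of the Boolean network with functions `F`:
either exactly one variable `i` changes and takes the value `F i s = !(s i)`,
or the state stays the same and some variable `i` satisfies `F i s = s i`. -/
def Step {n : ℕ} (F : Fin n → BNState n → Bool) (s s' : BNState n) : Prop :=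
  (∃ i, s' i = F i s ∧ s' i = !(s i) ∧ ∀ j, j ≠ i → s' j = s j) ∨
  (s' = s ∧ ∃ i, F i s = s i)

/-- The set of states reachable from `s` by a (possibly empty) sequence of transitions. -/
def reach {n : ℕ} (F : Fin n → BNState n → Bool) (s : BNState n) : Set (BNState n) :=
  {s' | Relation.ReflTransGen (Step F) s s'}

/-- An attractor: a minimal non-empty set `A` of states with `reach F s = A` for every `s ∈ A`. -/
def IsAttractor {n : ℕ} (F : Fin n → BNState n → Bool) (A : Set (BNState n)) : Prop :=
  A.Nonempty ∧ (∀ s ∈ A, reach F s = A) ∧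
  ∀ B, B ⊆ A → B.Nonempty → (∀ s ∈ B, reach F s = B) → B = A

/-- An infinite path of the transition system. -/
def IsPath {n : ℕ} (F : Fin n → BNState n → Bool) (π : ℕ → BNState n) : Prop :=
  ∀ k, Step F (π k) (π (k + 1))

/-- A state occurs infinitely often in the sequence `π`. -/
def InfOften {n : ℕ} (π : ℕ → BNState n) (x : BNState n) : Prop :=
  ∀ N, ∃ k, N ≤ k ∧ π k = x

/-- Fairness: every possible next state of every state occurring infinitely often
also occurs infinitely often. -/
def Fair {n : ℕ} (F : Fin n → BNState n → Bool) (π : ℕ → BNState n) : Prop :=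
  ∀ x, InfOften π x → ∀ y, Step F x y → InfOften π y

/-- The weak basin of `A`: states from which `A` is reachable. -/
def weakBasin {n : ℕ} (F : Fin n → BNState n → Bool) (A : Set (BNState n)) :
    Set (BNState n) :=
  {s | (reach F s ∩ A).Nonempty}

/-- The strong basin of an attractor `A`: states from which `A` is reachable and
no other attractor is reachable. -/
def strongBasin {n : ℕ} (F : Fin n → BNState n → Bool) (A : Set (BNState n)) :
    Set (BNState n) :=
  {s | (reach F s ∩ A).Nonempty ∧
       ∀ A', IsAttractor F A' → A' ≠ A → reach F s ∩ A' = ∅}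

/-- The application of the control `C = (O, I)` to a state. -/
def applyControl {n : ℕ} (O I : Finset (Fin n)) (s : BNState n) : BNState n :=
  fun i => if i ∈ O then false else if i ∈ I then true else s i

/-- The Boolean functions of the network under control `C = (O, I)`. -/
def ctrlF {n : ℕ} (O I : Finset (Fin n)) (F : Fin n → BNState n → Bool) :
    Fin n → BNState n → Bool :=
  fun i s => if i ∈ O then false else if i ∈ I then true else F i s

/-- The state space `S|_C` of the network under control `C = (O, I)`. -/
def ctrlSpace {n : ℕ} (O I : Finset (Fin n)) : Set (BNState n) :=
  {s | (∀ i ∈ O, s i = false) ∧ (∀ i ∈ I, s i = true)}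

/-- `S'` is a schema with off-set `O`, on-set `I` and don't-care-set `D`. -/
def IsSchema {n : ℕ} (S' : Set (BNState n)) (O I D : Finset (Fin n)) : Prop :=
  Disjoint O I ∧ Disjoint O D ∧ Disjoint I D ∧ O ∪ I ∪ D = Finset.univ ∧
  S' = {s : BNState n | (∀ i ∈ O, s i = false) ∧ (∀ i ∈ I, s i = true)}

/-- The strong basin, in the transition system with functions `F` and state space `SC`,
of a target set of states `W`: the states of `SC` from which `W` is reachable and
no attractor disjoint from `W` is reachable. -/
def strongBasinSet {n : ℕ} (F : Fin n → BNState n → Bool) (SC W : Set (BNState n)) :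
    Set (BNState n) :=
  {s | s ∈ SC ∧ (reach F s ∩ W).Nonempty ∧
       ∀ A', IsAttractor F A' → A' ∩ W = ∅ → reach F s ∩ A' = ∅}

open Filter Relation

namespace Relation

variable {α : Type*} {G : α → α → Prop}

theorem TransGen.exists_path {a b : α} (h : TransGen G a b) :
    ∃ L, 0 < L ∧ ∃ p : ℕ → α, p 0 = a ∧ p L = b ∧ ∀ r < L, G (p r) (p (r + 1)) := by
  induction h using TransGen.head_induction_on with
  | @single a hab => exact ⟨1, one_pos, fun r => if r = 0 then a else b, by simp, by simp, by simpa⟩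
  | @head a c hac _ ih =>
    obtain ⟨L, -, p, hp0, hpL, hp⟩ := ih
    refine ⟨L + 1, L.succ_pos, fun r => if r = 0 then a else p (r - 1), by simp, by simpa, ?_⟩
    rintro (_ | r) hr
    · simpa [hp0] using hac
    · simpa using hp r (by omega)

theorem reflTransGen_of_forall_rel_succ {π : ℕ → α} (hπ : ∀ k, G (π k) (π (k + 1)))
    {i j : ℕ} (hij : i ≤ j) : ReflTransGen G (π i) (π j) := by
  induction j, hij using Nat.le_induction with
  | base => exact .refl
  | succ j _ ih => exact ih.tail (hπ j)

theorem exists_path_through {x : ℕ → α} (hx : ∀ j, TransGen G (x j) (x (j + 1))) :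
    ∃ π : ℕ → α, π 0 = x 0 ∧ (∀ k, G (π k) (π (k + 1))) ∧ ∀ j, ∃ k, j ≤ k ∧ π k = x j := by
  choose L hL p hp0 hpL hp using fun j => (hx j).exists_path
  -- the position on the glued path, as (index of the segment, offset within it)
  let next : ℕ × ℕ → ℕ × ℕ := fun q => if q.2 + 1 = L q.1 then (q.1 + 1, 0) else (q.1, q.2 + 1)
  let σ : ℕ → ℕ × ℕ := fun k => next^[k] (0, 0)
  have hσ_succ (k : ℕ) : σ (k + 1) = next (σ k) := Function.iterate_succ_apply' next k (0, 0)
  have hσ_lt (k : ℕ) : (σ k).2 < L (σ k).1 := by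
    induction k with
    | zero => exact hL 0
    | succ k ih =>
      rw [hσ_succ]
      by_cases h : (σ k).2 + 1 = L (σ k).1
      · simp only [next, if_pos h]; exact hL _
      · simp only [next, if_neg h]; omega
  refine ⟨fun k => p (σ k).1 (σ k).2, hp0 0, fun k => ?_, ?_⟩
  · show G (p (σ k).1 (σ k).2) (p (σ (k + 1)).1 (σ (k + 1)).2)
    rw [hσ_succ]
    by_cases h : (σ k).2 + 1 = L (σ k).1
    · simp only [next, if_pos h, hp0, ← hpL, ← h]
      exact hp _ _ (hσ_lt k)
    · simp only [next, if_neg h]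
      exact hp _ _ (hσ_lt k)
  · have hstart : ∀ j, ∃ k, j ≤ k ∧ σ k = (j, 0) := by
      intro j
      induction j with
      | zero => exact ⟨0, le_rfl, rfl⟩
      | succ j ih =>
        obtain ⟨k, hjk, hk⟩ := ih
        have hinside : ∀ r < L j, σ (k + r) = (j, r) := by
          intro r hr
          induction r with
          | zero => exact hk
          | succ r ihr =>
            rw [← add_assoc, hσ_succ, ihr (by omega)]
            simp only [next, if_neg (show r + 1 ≠ L j by omega)]
        refine ⟨k + L j, by have := hL j; omega, ?_⟩
        obtain ⟨r, hr⟩ : ∃ r, L j = r + 1 := Nat.exists_eq_succ_of_ne_zero (hL j).ne'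
        rw [hr, ← add_assoc, hσ_succ, hinside r (by omega)]
        simp only [next, hr, if_true]
    intro j
    obtain ⟨k, hjk, hk⟩ := hstart j
    exact ⟨k, hjk, by simp only [hk, hp0]⟩

theorem exists_reflTransGen_terminal [Finite α] (G : α → α → Prop) (x : α) :
    ∃ s, ReflTransGen G x s ∧ ∀ t, ReflTransGen G s t → ReflTransGen G t s := by
  obtain ⟨s, hxs, hmin⟩ := exists_minimalFor_of_wellFoundedLT (ReflTransGen G x)
    (fun a => {t | ReflTransGen G a t}) ⟨x, .refl⟩
  exact ⟨s, hxs, fun t hst => hmin (hxs.trans hst) (fun u htu => hst.trans htu) .refl⟩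

theorem exists_fair_path [Finite α] (hG : ∀ a, ∃ b, G a b) (x : α) :
    ∃ π : ℕ → α, π 0 = x ∧ (∀ k, G (π k) (π (k + 1))) ∧
      ∀ u, (∃ᶠ k in atTop, π k = u) → ∀ v, G u v → ∃ᶠ k in atTop, π k = v := by
  obtain ⟨s, hxs, hs⟩ := exists_reflTransGen_terminal G x
  let B := {t | ReflTransGen G s t}
  have hcycle {a t : α} (hat : ReflTransGen G a t) (ht : t ∈ B) : TransGen G a t := by
    obtain ⟨c, htc⟩ := hG t
    exact TransGen.trans_right hat (TransGen.head' htc ((hs c (ReflTransGen.tail ht htc)).trans ht))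
  have : Nonempty B := ⟨⟨s, .refl⟩⟩
  obtain ⟨f, hf⟩ := exists_surjective_nat B
  -- waypoints: `x`, then every state of `B` infinitely often
  let w : ℕ → α := fun j => if j = 0 then x else f (j - 1).unpair.1
  have hwB (j : ℕ) : w (j + 1) ∈ B := by simp [w]
  have hws (j : ℕ) : ReflTransGen G (w j) s := by
    rcases j with _ | j
    · exact hxs
    · exact hs _ (hwB j)
  obtain ⟨π, hπ0, hπ, hvisit⟩ := exists_path_through (G := G) (x := w)
    fun j => hcycle ((hws j).trans (hwB j)) (hwB j)
  refine ⟨π, hπ0, hπ, fun u hu v huv => ?_⟩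
  obtain ⟨k₁, -, hk₁⟩ := hvisit 1
  obtain ⟨k, hk₁k, rfl⟩ := frequently_atTop.mp hu k₁
  have hvB : v ∈ B :=
    ((hwB 0).trans (hk₁ ▸ reflTransGen_of_forall_rel_succ hπ hk₁k)).tail huv
  obtain ⟨m, hm⟩ := hf ⟨v, hvB⟩
  refine frequently_atTop.mpr fun N => ?_
  obtain ⟨k', hk', hk'v⟩ := hvisit (Nat.pair m N + 1)
  refine ⟨k', (Nat.right_le_pair m N).trans (by omega), ?_⟩
  simp [hk'v, w, hm]

end Relation

section BooleanNetwork

variable {n : ℕ}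

theorem exists_step (hn : 1 ≤ n) (F : Fin n → BNState n → Bool) (s : BNState n) :
    ∃ t, Step F s t := by
  let i : Fin n := ⟨0, hn⟩
  by_cases h : F i s = s i
  · exact ⟨s, Or.inr ⟨rfl, i, h⟩⟩
  · refine ⟨Function.update s i (F i s),
      Or.inl ⟨i, by simp, ?_, fun j hj => Function.update_of_ne hj _ _⟩⟩
    simpa using Bool.eq_not.mpr h

theorem exists_isPath_fair (hn : 1 ≤ n) (F : Fin n → BNState n → Bool) (s : BNState n) :
    ∃ π, π 0 = s ∧ IsPath F π ∧ Fair F π := by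
  obtain ⟨π, hπ0, hπ, hfair⟩ := exists_fair_path (exists_step hn F) s
  exact ⟨π, hπ0, hπ, fun u hu v huv => frequently_atTop.mp (hfair u (frequently_atTop.mpr hu) v huv)⟩

theorem applyControl_applyControl (O I : Finset (Fin n)) (s : BNState n) :
    applyControl O I (applyControl O I s) = applyControl O I s := by
  funext i
  simp only [applyControl]
  split_ifs <;> rfl

theorem ctrlF_apply_of_applyControl_eq {O I : Finset (Fin n)} {F : Fin n → BNState n → Bool}
    {c : BNState n} (hc : applyControl O I c = c) {i : Fin n} (hi : i ∈ O ∨ i ∈ I) :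
    ctrlF O I F i c = c i := by
  rw [← congrFun hc i]
  by_cases hiO : i ∈ O <;> simp_all [ctrlF, applyControl]

theorem Step.reflTransGen_of_ctrlF {O I : Finset (Fin n)} {F : Fin n → BNState n → Bool}
    {c c' : BNState n} (hc : applyControl O I c = c) (h : Step (ctrlF O I F) c c') :
    applyControl O I c' = c' ∧ ReflTransGen (Step F) c c' := by
  rcases h with ⟨i, hc'F, hflip, hc'c⟩ | ⟨rfl, -⟩
  · have hfree : i ∉ O ∧ i ∉ I := not_or.mp fun hi => by
      rw [hc'F, ctrlF_apply_of_applyControl_eq hc hi] at hflip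
      exact Bool.eq_not_self _ |>.mp hflip
    refine ⟨funext fun j => ?_, .single (Or.inl ⟨i, ?_, hflip, hc'c⟩)⟩
    · by_cases hji : j = i
      · simp [applyControl, hji, hfree]
      · simpa only [applyControl, hc'c j hji] using congrFun hc j
    · simpa [ctrlF, hfree] using hc'F
  · exact ⟨hc, .refl⟩

theorem reflTransGen_of_ctrlF {O I : Finset (Fin n)} {F : Fin n → BNState n → Bool}
    {c d : BNState n} (hc : applyControl O I c = c) (h : ReflTransGen (Step (ctrlF O I F)) c d) :
    ReflTransGen (Step F) c d := by
  suffices applyControl O I d = d ∧ ReflTransGen (Step F) c d from this.2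
  induction h with
  | refl => exact ⟨hc, .refl⟩
  | tail _ hstep ih =>
    obtain ⟨hb, hcb⟩ := ih
    obtain ⟨hd, hbd⟩ := hstep.reflTransGen_of_ctrlF hb
    exact ⟨hd, hcb.trans hbd⟩

end BooleanNetwork

theorem ttc_implies_weakBasin_general {n : ℕ} (hn : 1 ≤ n)
    (F : Fin n → BNState n → Bool) (At : Set (BNState n))
    (O I : Finset (Fin n))
    (httc : ∀ s : BNState n, ∀ ρ : ℕ → BNState n,
        IsPath (ctrlF O I F) ρ → Fair (ctrlF O I F) ρ → ρ 0 = applyControl O I s →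
        ∃ t0 : ℕ, ∀ t, t0 ≤ t →
          ∀ π : ℕ → BNState n, IsPath F π → Fair F π → π 0 = ρ t → ∃ k, π k ∈ At) :
    Set.range (applyControl O I) ⊆ weakBasin F At := by
  rintro _ ⟨s, rfl⟩
  obtain ⟨ρ, hρ0, hρ, hρfair⟩ := exists_isPath_fair hn (ctrlF O I F) (applyControl O I s)
  obtain ⟨t₀, ht₀⟩ := httc s ρ hρ hρfair hρ0
  obtain ⟨π, hπ0, hπ, hπfair⟩ := exists_isPath_fair hn F (ρ t₀)
  obtain ⟨k, hk⟩ := ht₀ t₀ le_rfl π hπ hπfair hπ0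
  have hρ_reach : ReflTransGen (Step F) (applyControl O I s) (ρ t₀) :=
    reflTransGen_of_ctrlF (applyControl_applyControl O I s)
      (hρ0 ▸ reflTransGen_of_forall_rel_succ hρ t₀.zero_le)
  exact ⟨π k, hρ_reach.trans (hπ0 ▸ reflTransGen_of_forall_rel_succ hπ k.zero_le), hk⟩

/-- if `C` is a temporary target control for `At`, then every
intermediate state lies in the weak basin of `At` in `TS`. -/
theorem ttc_implies_weakBasin {n : ℕ} (hn : 1 ≤ n)
    (F : Fin n → BNState n → Bool) (At : Set (BNState n)) (hAt : IsAttractor F At)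
    (O I : Finset (Fin n)) (hOI : Disjoint O I)
    (httc : ∀ s : BNState n, ∀ ρ : ℕ → BNState n,
        IsPath (ctrlF O I F) ρ → Fair (ctrlF O I F) ρ → ρ 0 = applyControl O I s →
        ∃ t0 : ℕ, ∀ t, t0 ≤ t →
          ∀ π : ℕ → BNState n, IsPath F π → Fair F π → π 0 = ρ t → ∃ k, π k ∈ At) :
    Set.range (applyControl O I) ⊆ weakBasin F At :=
  ttc_implies_weakBasin_general hn F At O I httc
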